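/- Let S be a set with a deterministic transition δ : S × A → S on a finite action set A, and let r(s,a) := f(s,a) − max_{a'} f(δ(s,a), a') for a bounded f. Define q_1(s,a) = r(s,a) and q_{n+1}(s,a) = r(s,a) + max_{a'} q_n(δ(s,a), a'). Then q_n(s,a) = f(s,a) + max over length-(n−1) continuations a_2,…,a_n of [ −max_{a'} f(s_{n+1}, a') + Σ_{t=2}^{n} ( f(s_t,a_t) − max_{a'} f(s_t, a') ) ], where s_1 = s, a_1 = a and s_{t+1} = δ(s_t,a_t). -/
import Mathlib

open Finset

variable {S A : Type*}

/-- `maxf f s = max_{a'} f s a'`. -/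
noncomputable def maxf [Fintype A] [Nonempty A] (f : S → A → ℝ) (s : S) : ℝ :=
  Finset.univ.sup' Finset.univ_nonempty (f s)

/-- `Phi δ f n s` is the maximum, over length-`n` action continuations
`a₂, …, a_{n+1}` starting from state `s₂ = s` (with `s_{t+1} = δ s_t a_t`), of
`(∑_t (f s_t a_t - max_{a'} f s_t a')) - max_{a'} f s_{n+2} a'`; unrolled, it is
exactly the bracketed quantity of STATEMENT 5. -/
noncomputable def Phi [Fintype A] [Nonempty A] (δ : S → A → S) (f : S → A → ℝ) :
    ℕ → S → ℝ
  | 0, s => -maxf f s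
  | n + 1, s =>
      Finset.univ.sup' Finset.univ_nonempty
        (fun a => f s a - maxf f s + Phi δ f n (δ s a))

/-- The finite-horizon action value `q_n` defined from the induced reward
`r s a = f s a - max_{a'} f (δ s a) a'` by `q₁ = r` and
`q_{n+1} s a = r s a + max_{a'} q_n (δ s a) a'` (here 0-indexed: `qrec 0 = q₁`). -/
noncomputable def qrec [Fintype A] [Nonempty A] (δ : S → A → S) (f : S → A → ℝ) :
    ℕ → S → A → ℝ
  | 0, s, a => f s a - maxf f (δ s a)
  | n + 1, s, a =>
      (f s a - maxf f (δ s a))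
        + Finset.univ.sup' Finset.univ_nonempty (qrec δ f n (δ s a))

/-- the finite-horizon value of the induced reward equals
`f s a` plus the best continuation correction `Phi`, by induction on `n`. -/
theorem qrec_eq_f_add_phi [Fintype A] [Nonempty A]
    (δ : S → A → S) (f : S → A → ℝ) (n : ℕ) (s : S) (a : A) :
    qrec δ f n s a = f s a + Phi δ f n (δ s a) := by
  induction n generalizing s a with
  | zero => simp [qrec, Phi, sub_eq_add_neg]
  | succ n ih =>
    have h : (Finset.univ.sup' Finset.univ_nonempty (qrec δ f n (δ s a)))
        - maxf f (δ s a)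
        = Finset.univ.sup' Finset.univ_nonempty
          (fun a' => f (δ s a) a' - maxf f (δ s a) + Phi δ f n (δ (δ s a) a')) := by
      rw [show (Finset.univ.sup' Finset.univ_nonempty (qrec δ f n (δ s a))) - maxf f (δ s a)
          = Finset.univ.sup' Finset.univ_nonempty
              ((· - maxf f (δ s a)) ∘ (qrec δ f n (δ s a))) from
        (Finset.comp_sup'_eq_sup'_comp Finset.univ_nonempty (· - maxf f (δ s a))
          (fun x y => (max_sub_sub_right x y _).symm))]
      simp only [Function.comp]
      congr 1
      funext a'
      rw [ih]
      ring
    simp only [qrec, Phi]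
    linarith [h]
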